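/- Under the ad hoc halving method (two colors, permutation 132), the normalized mixing metric satisfies Φ < 2 for all N; specifically, at the worst-case iterations N = 2^i − 2, Φ = 2 − 1/2^{i-1}. -/
import Mathlib


/-- One bisection step on a multiset of segment lengths: a longest segment is removed
and replaced by its two halves. -/
def Halve (s t : Multiset ℝ) : Prop :=
  ∃ x ∈ s, (∀ y ∈ s, y ≤ x) ∧ t = x / 2 ::ₘ x / 2 ::ₘ s.erase x


/-- explicit multiset after n steps -/
noncomputable def M (n : ℕ) : Multiset ℝ :=
  Multiset.replicate (2 ^ (Nat.log 2 (n+1) + 1) - (n+1)) ((1:ℝ) / 2 ^ (Nat.log 2 (n+1) + 1)) +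
  Multiset.replicate (2 * (n + 1 - 2 ^ Nat.log 2 (n+1))) ((1:ℝ) / 2 ^ (Nat.log 2 (n+1) + 2))

lemma log_bounds (n : ℕ) : 2 ^ Nat.log 2 (n+1) ≤ n + 1 ∧ n + 1 < 2 ^ (Nat.log 2 (n+1) + 1) :=
  ⟨Nat.pow_log_le_self 2 (Nat.succ_ne_zero n), Nat.lt_pow_succ_log_self one_lt_two _⟩

lemma halve_M {n : ℕ} {t : Multiset ℝ} (h : Halve (M n) t) : t = M (n+1) := by
  obtain ⟨x, hx, hmax, ht⟩ := h
  set i := Nat.log 2 (n+1) with hi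
  obtain ⟨hlb, hub⟩ := log_bounds n
  rw [← hi] at hlb hub
  set a : ℝ := (1:ℝ) / 2 ^ (i+1) with ha
  set b : ℝ := (1:ℝ) / 2 ^ (i+2) with hb
  have hba : b < a := by
    rw [ha, hb]
    apply div_lt_div_of_pos_left one_pos (by positivity)
    exact pow_lt_pow_right₀ one_lt_two (by omega)
  have hcb : 1 ≤ 2 ^ (i+1) - (n+1) := by omega
  have hamem : a ∈ M n := by
    rw [M, ← hi]
    exact Multiset.mem_add.2 (Or.inl (Multiset.mem_replicate.2 ⟨by omega, rfl⟩))
  have hxa : x = a := by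
    rw [M] at hx
    rcases Multiset.mem_add.1 hx with h1 | h1
    · exact (Multiset.mem_replicate.1 h1).2
    · have := (Multiset.mem_replicate.1 h1).2
      have := hmax a hamem
      nlinarith
  have hx2 : x / 2 = b := by
    rw [hxa, ha, hb]; rw [pow_succ]; ring
  have herase : (M n).erase x = Multiset.replicate (2 ^ (i+1) - (n+1) - 1) a +
      Multiset.replicate (2 * (n + 1 - 2 ^ i)) b := by
    rw [hxa, M, ← hi]
    rw [Multiset.erase_add_left_pos _ (Multiset.mem_replicate.2 ⟨by omega, rfl⟩)]
    congr 1
    conv_lhs => rw [show 2 ^ (i+1) - (n+1) = (2 ^ (i+1) - (n+1) - 1) + 1 from by omega,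
      Multiset.replicate_succ]
    rw [Multiset.erase_cons_head]
  have ht' : t = Multiset.replicate (2 ^ (i+1) - (n+1) - 1) a +
      Multiset.replicate (2 * (n + 1 - 2 ^ i) + 2) b := by
    rw [ht, hx2, herase]
    rw [show 2 * (n + 1 - 2 ^ i) + 2 = (2 * (n + 1 - 2 ^ i)) + 1 + 1 from rfl]
    rw [Multiset.replicate_succ, Multiset.replicate_succ]
    rw [← Multiset.singleton_add, ← Multiset.singleton_add, ← Multiset.singleton_add,
        ← Multiset.singleton_add]
    abel
  by_cases hcase : n + 2 < 2 ^ (i+1)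
  · have hlog : Nat.log 2 (n+2) = i := by
      apply Nat.log_eq_of_pow_le_of_lt_pow
      · omega
      · omega
    rw [ht', M]
    rw [show n + 1 + 1 = n + 2 from rfl, hlog]
    congr 2 <;> omega
  · have hn2 : n + 2 = 2 ^ (i+1) := by omega
    have hlog : Nat.log 2 (n+2) = i + 1 := by
      apply Nat.log_eq_of_pow_le_of_lt_pow
      · omega
      · rw [pow_succ]; omega
    rw [ht', M]
    rw [show n + 1 + 1 = n + 2 from rfl, hlog]
    rw [show 2 ^ (i+1) - (n+1) - 1 = 0 from by omega,
        show 2 * (n + 2 - 2 ^ (i+1)) = 0 from by omega,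
        show 2 ^ (i+1+1) - (n+2) = 2 * (n + 1 - 2 ^ i) + 2 from by rw [pow_succ]; omega]
    simp [hb]

lemma eq_M (B : ℕ → Multiset ℝ) (hB0 : B 0 = {(1 : ℝ) / 2})
    (hBs : ∀ n, Halve (B n) (B (n + 1))) : ∀ n, B n = M n := by
  intro n
  induction n with
  | zero =>
    rw [hB0, M]
    norm_num [Nat.log]
  | succ n ih =>
    have := hBs n
    rw [ih] at this
    exact halve_M this

/-- Under the ad hoc halving method (two colors, permutation `132`),
with `u` the longest segment length after `N` iterations, the normalized mixing metric
`Φ = (2N+2)·u` (in the two-color case `Φ = Û = D̂ = (2N+2)·U`) satisfies `Φ < 2` for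
all `N`; specifically, at the worst-case iterations `N = 2^i - 2` (for `i ≥ 1`),
`Φ = 2 - 1/2^(i-1)`. -/
theorem stmt15 (N : ℕ) (B G : ℕ → Multiset ℝ)
    (hB0 : B 0 = {(1 : ℝ) / 2}) (hG0 : G 0 = {(1 : ℝ) / 2})
    (hBs : ∀ n, Halve (B n) (B (n + 1)))
    (hGs : ∀ n, Halve (G n) (G (n + 1)))
    (u : ℝ) (hu : u ∈ B N + G N) (hmax : ∀ y ∈ B N + G N, y ≤ u) :
    ((2 * N + 2 : ℕ) : ℝ) * u < 2 ∧
      ∀ i : ℕ, 1 ≤ i → N = 2 ^ i - 2 →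
        ((2 * N + 2 : ℕ) : ℝ) * u = 2 - 1 / 2 ^ (i - 1) := by
  have hBM := eq_M B hB0 hBs N
  have hGM := eq_M G hG0 hGs N
  set i := Nat.log 2 (N+1) with hi
  obtain ⟨hlb, hub⟩ := log_bounds N
  rw [← hi] at hlb hub
  set a : ℝ := (1:ℝ) / 2 ^ (i+1) with ha
  set b : ℝ := (1:ℝ) / 2 ^ (i+2) with hb
  have hba : b < a := by
    rw [ha, hb]
    apply div_lt_div_of_pos_left one_pos (by positivity)
    exact pow_lt_pow_right₀ one_lt_two (by omega)
  have hamem : a ∈ B N + G N := by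
    rw [hBM, hGM, M, ← hi]
    exact Multiset.mem_add.2 (Or.inl (Multiset.mem_add.2 (Or.inl
      (Multiset.mem_replicate.2 ⟨by omega, rfl⟩))))
  have hua : u = a := by
    rw [hBM, hGM, M] at hu
    have hle := hmax a hamem
    rcases Multiset.mem_add.1 hu with h1 | h1 <;>
      rcases Multiset.mem_add.1 h1 with h2 | h2 <;>
      have := (Multiset.mem_replicate.1 h2).2 <;> nlinarith
  have hpow : (0:ℝ) < 2 ^ (i+1) := by positivity
  have hcast : ((2 * N + 2 : ℕ) : ℝ) = 2 * ((N:ℝ) + 1) := by push_cast; ring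
  constructor
  · rw [hua, ha, hcast]
    rw [mul_one_div, div_lt_iff₀ hpow]
    have : ((N:ℝ) + 1) < 2 ^ (i+1) := by
      exact_mod_cast hub
    linarith
  · intro j hj hN
    have h2j : 2 ≤ 2 ^ j := by
      calc 2 = 2^1 := rfl
      _ ≤ 2 ^ j := Nat.pow_le_pow_right (by norm_num) hj
    have hN1 : N + 1 = 2 ^ j - 1 := by omega
    have hij : i = j - 1 := by
      rw [hi, hN1]
      apply Nat.log_eq_of_pow_le_of_lt_pow
      · have : 2 ^ (j-1) * 2 = 2 ^ j := by
          rw [← pow_succ]; congr 1; omega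
        omega
      · have : 2 ^ (j-1+1) = 2 ^ j := by congr 1; omega
        omega
    rw [hua, ha, hcast, hij]
    have hj1 : j - 1 + 1 = j := by omega
    rw [hj1]
    have hNr : (N:ℝ) = 2 ^ j - 2 := by
      rw [hN]; push_cast [h2j]; ring
    have hpj : (0:ℝ) < 2 ^ j := by positivity
    have hpj1 : (2:ℝ) ^ j = 2 * 2 ^ (j-1) := by
      rw [← pow_succ']; congr 1; omega
    rw [hNr]
    field_simp
    rw [hpj1]; ring
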